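/- Let G be a finite simple graph with nonnegative edge weights x such that every odd simple cycle of G has total weight at least 1. Then every closed walk of odd length in G has total weight at least 1, where the weight of a walk is the sum of the weights of its edges counted with multiplicity. -/

import Mathlib

/-!
Strong induction on the length of the closed walk `W = cons h p`. If `p` is a path, `W` is a
cycle, since odd length rules out going back and forth along a single edge. Otherwise `p`
contains a nontrivial closed subwalk `c`; cutting it out leaves a closed walk `D` with
`|W| = |c| + |D|` and `w(W) = w(c) + w(D)`. One of `c`, `D` is a shorter odd closed walk, and the
other has nonnegative weight.
-/

open SimpleGraph

/-- The weight of a walk: the sum of the weights of its edges, counted with multiplicity. -/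
def walkWeight {V : Type*} {G : SimpleGraph V} (x : Sym2 V → ℝ) {u v : V}
    (p : G.Walk u v) : ℝ :=
  (p.edges.map x).sum

namespace SimpleGraph.Walk

variable {V : Type*} {G : SimpleGraph V} {u v w : V}

theorem cons_isCycle_iff_isPath_and_length_ne_one (h : G.Adj u v) (p : G.Walk v u) :
    (cons h p).IsCycle ↔ p.IsPath ∧ p.length ≠ 1 := by
  have hp : p.length ≠ 0 := fun h0 => h.ne (p.eq_of_length_eq_zero h0).symm
  rw [isCycle_iff_isPath_tail_and_le_length]
  simp only [tail_cons, getVert_cons_succ, isPath_copy, length_cons]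
  exact and_congr_right fun _ => by omega

theorem exists_eq_append_append_of_not_isPath (p : G.Walk u v) (hp : ¬p.IsPath) :
    ∃ (w : V) (a : G.Walk u w) (c : G.Walk w w) (b : G.Walk w v),
      0 < c.length ∧ p = a.append (c.append b) := by
  classical
  induction p with
  | nil => exact absurd IsPath.nil hp
  | @cons u _ _ h q ih =>
    by_cases hq : q.IsPath
    · have hu : u ∈ q.support := by
        simpa [cons_isPath_iff, hq] using hp
      refine ⟨u, nil, cons h (q.takeUntil u hu), q.dropUntil u hu, by simp, ?_⟩
      rw [nil_append, cons_append, take_spec]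
    · obtain ⟨w, a, c, b, hc, rfl⟩ := ih hq
      exact ⟨w, cons h a, c, b, hc, rfl⟩

theorem length_append_append (a : G.Walk u w) (c : G.Walk w w) (b : G.Walk w v) :
    (a.append (c.append b)).length = c.length + (a.append b).length := by
  simp only [length_append]
  omega

end SimpleGraph.Walk

section walkWeight

variable {V : Type*} {G : SimpleGraph V} {x : Sym2 V → ℝ} {u v w : V}

theorem walkWeight_append (p : G.Walk u v) (q : G.Walk v w) :
    walkWeight x (p.append q) = walkWeight x p + walkWeight x q := by
  simp [walkWeight, Walk.edges_append]

theorem walkWeight_append_append (a : G.Walk u w) (c : G.Walk w w) (b : G.Walk w v) :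
    walkWeight x (a.append (c.append b)) = walkWeight x c + walkWeight x (a.append b) := by
  simp only [walkWeight_append]
  ring

theorem walkWeight_nonneg (hx : ∀ e ∈ G.edgeSet, 0 ≤ x e) (p : G.Walk u v) :
    0 ≤ walkWeight x p :=
  List.sum_nonneg fun _ hy => by
    obtain ⟨e, he, rfl⟩ := List.mem_map.mp hy
    exact hx e (p.edges_subset_edgeSet he)

end walkWeight

theorem stmt2_general {V : Type*} (G : SimpleGraph V) (x : Sym2 V → ℝ)
    (hx : ∀ e ∈ G.edgeSet, 0 ≤ x e)
    (hodd : ∀ (v : V) (C : G.Walk v v), C.IsCycle → Odd C.length → 1 ≤ walkWeight x C)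
    (v : V) (W : G.Walk v v) (hW : Odd W.length) :
    1 ≤ walkWeight x W := by
  induction hn : W.length using Nat.strong_induction_on generalizing v W with
  | _ n ih =>
  cases W with
  | nil => simp at hW
  | cons h p =>
  by_cases hp : p.IsPath
  · have hp1 : p.length ≠ 1 := by rintro h1; simp [h1, ← Nat.not_even_iff_odd] at hW
    exact hodd _ _ ((Walk.cons_isCycle_iff_isPath_and_length_ne_one h p).2 ⟨hp, hp1⟩) hW
  obtain ⟨w, a, c, b, hc, rfl⟩ := p.exists_eq_append_append_of_not_isPath hp
  rw [← Walk.cons_append, Walk.length_append_append] at hn hW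
  rw [← Walk.cons_append, walkWeight_append_append]
  have hD : 0 < ((Walk.cons h a).append b).length := by simp
  by_cases hcodd : Odd c.length
  · linarith [ih _ (by omega) w c hcodd rfl, walkWeight_nonneg hx ((Walk.cons h a).append b)]
  · have hDodd := (Nat.odd_add'.1 hW).2 (Nat.not_odd_iff_even.1 hcodd)
    linarith [ih _ (by omega) v _ hDodd rfl, walkWeight_nonneg hx c]

/-- If every odd simple cycle has total weight at least 1 (with nonnegative edge weights),
then every closed walk of odd length has total weight at least 1. -/
theorem stmt2 {V : Type*} [Fintype V] (G : SimpleGraph V) (x : Sym2 V → ℝ)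
    (hx : ∀ e ∈ G.edgeSet, 0 ≤ x e)
    (hodd : ∀ (v : V) (C : G.Walk v v), C.IsCycle → Odd C.length → 1 ≤ walkWeight x C)
    (v : V) (W : G.Walk v v) (hW : Odd W.length) :
    1 ≤ walkWeight x W :=
  stmt2_general G x hx hodd v W hW
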